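/- For every ε ∈ [0, 1/2], the distributions P₀ and P₁ satisfy TV(P₀, P₁) ≥ (1/2) KL(P₁ ‖ P₀). -/

import Mathlib

/-!
Statement 4 (prop:dist_bd): with Ω = {0,1}, for every ε ∈ [0, 1/2],
TV(P₀, P₁) ≥ (1/2)·KL(P₁ ‖ P₀), where P₀ is the uniform distribution on Ω³ and P₁ is
the distribution with Y uniform and independent of (X,Z), P₁(X=x,Z=x) = (1−ε)/2,
P₁(X=x,Z=1−x) = ε/2.  KL is taken with base-2 logarithms.
-/

open scoped BigOperators

noncomputable section

/-- The binary alphabet Ω = {0,1}. -/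
abbrev Om : Type := Bool

/-- P₀: the uniform distribution on Ω³ (coordinates (X, Y, Z)). -/
def Pzero : Om × Om × Om → ℝ := fun _ => 1 / 8

/-- P₁: Y uniform and independent of (X, Z); the (X,Z)-marginal puts mass (1−ε)/2 on
each diagonal pair (x, x) and mass ε/2 on each off-diagonal pair (x, 1−x).
Coordinates ordered as (X, Y, Z). -/
def Pone (ε : ℝ) : Om × Om × Om → ℝ :=
  fun w => (1 / 2) * (if w.2.2 = w.1 then (1 - ε) / 2 else ε / 2)

/-- KL divergence with base-2 logarithms: `KL(P‖Q) = Σ_w P(w) log₂(P(w)/Q(w))`,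
with the convention that terms with `P(w) = 0` vanish. -/
def klDivb2 (p q : Om × Om × Om → ℝ) : ℝ :=
  ∑ w, if p w = 0 then 0 else p w * Real.logb 2 (p w / q w)

/-- Total variation distance `TV(P,Q) = (1/2) Σ_w |P(w) − Q(w)|`. -/
def tvDist (p q : Om × Om × Om → ℝ) : ℝ :=
  (1 / 2) * ∑ w, |p w - q w|

/-!
In bits, `KL(P₁ ‖ P₀) = 1 - h(ε)` with `h` the binary entropy, and `TV(P₀, P₁) = (1 - 2ε)/2`.
The claim thus reduces to `h(ε) ≥ 2ε` on `[0, 1/2]`: the concave function `h` lies above its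
chord from `(0, 0)` to `(1/2, 1)`.
-/

open Real

lemma two_mul_mul_log_two_le_binEntropy {ε : ℝ} (h0 : 0 ≤ ε) (h1 : ε ≤ 1 / 2) :
    2 * ε * log 2 ≤ binEntropy ε := by
  have h := strictConcave_binEntropy.concaveOn.2 (by norm_num : (0 : ℝ) ∈ Set.Icc 0 1)
    (by norm_num : (2⁻¹ : ℝ) ∈ Set.Icc 0 1) (by linarith : 0 ≤ 1 - 2 * ε)
    (by linarith : 0 ≤ 2 * ε) (by ring)
  simp only [smul_eq_mul] at h
  rw [binEntropy_zero, binEntropy_two_inv,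
    show (1 - 2 * ε) * 0 + 2 * ε * 2⁻¹ = ε by ring] at h
  linarith

lemma mul_logb_two_mul (x : ℝ) : x * logb 2 (2 * x) = x + x * logb 2 x := by
  rcases eq_or_ne x 0 with rfl | hx
  · simp
  · rw [logb_mul two_ne_zero hx, logb_self_eq_one one_lt_two]
    ring

lemma klDivb2_eq_sum (p q : Om × Om × Om → ℝ) :
    klDivb2 p q = ∑ w, p w * logb 2 (p w / q w) :=
  Finset.sum_congr rfl fun w _ => by split_ifs with h <;> simp [h]

lemma klDivb2_Pone_Pzero (ε : ℝ) : klDivb2 (Pone ε) Pzero = 1 - binEntropy ε / log 2 := by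
  have hdiv : ∀ x : ℝ, 1 / 2 * (x / 2) / (1 / 8) = 2 * x := fun x => by ring
  simp only [klDivb2_eq_sum, Pone, Pzero, Fintype.sum_prod_type, Fintype.sum_bool,
    Bool.true_eq_false, Bool.false_eq_true, if_true, if_false, hdiv]
  calc _ = (1 - ε) * logb 2 (2 * (1 - ε)) + ε * logb 2 (2 * ε) := by ring
    _ = 1 - binEntropy ε / log 2 := by
      rw [mul_logb_two_mul, mul_logb_two_mul]
      simp only [binEntropy, logb, log_inv]
      ring

lemma tvDist_Pzero_Pone (ε : ℝ) : tvDist Pzero (Pone ε) = |1 - 2 * ε| / 2 := by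
  have hdiag : |(1 : ℝ) / 8 - 1 / 2 * ((1 - ε) / 2)| = |1 - 2 * ε| / 8 := by
    rw [← abs_neg, show -(1 / 8 - 1 / 2 * ((1 - ε) / 2)) = (1 - 2 * ε) / 8 by ring, abs_div]
    norm_num
  have hoff : |(1 : ℝ) / 8 - 1 / 2 * (ε / 2)| = |1 - 2 * ε| / 8 := by
    rw [show (1 : ℝ) / 8 - 1 / 2 * (ε / 2) = (1 - 2 * ε) / 8 by ring, abs_div]
    norm_num
  simp only [tvDist, Pone, Pzero, Fintype.sum_prod_type, Fintype.sum_bool,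
    Bool.true_eq_false, Bool.false_eq_true, if_true, if_false, hdiag, hoff]
  ring

/-- **Proposition prop:dist_bd of the paper.**  For every ε ∈ [0, 1/2],
`TV(P₀, P₁) ≥ (1/2) KL(P₁ ‖ P₀)`. -/
theorem tv_lower_bound_by_kl (ε : ℝ) (hε : ε ∈ Set.Icc (0 : ℝ) (1 / 2)) :
    (1 / 2) * klDivb2 (Pone ε) Pzero ≤ tvDist Pzero (Pone ε) := by
  obtain ⟨h0, h1⟩ := hε
  rw [klDivb2_Pone_Pzero, tvDist_Pzero_Pone]
  have hent : 2 * ε ≤ binEntropy ε / log 2 := by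
    rw [le_div_iff₀ (log_pos one_lt_two)]
    linarith [two_mul_mul_log_two_le_binEntropy h0 h1]
  linarith [le_abs_self (1 - 2 * ε)]

end
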